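/- In a two-transmitter interference channel with rates C_j = log₂(1 + p_j h_j / (p_{j'} g_{j'} + σ²)), if both links must satisfy C_j ≥ C_min with ρ := 2^{C_min} − 1 > 0, then a feasible power pair (p_1, p_2) with p_1, p_2 ≥ 0 exists if and only if ρ² g_1 g_2 < h_1 h_2. -/
import Mathlib


/-- In a two-transmitter interference channel, a feasible nonnegative power pair
satisfying both SINR constraints exists if and only if `ρ² g₁ g₂ < h₁ h₂`. -/
theorem two_link_feasibility
    (h1 h2 g1 g2 σ2 Cmin ρ : ℝ)
    (hh1 : 0 < h1) (hh2 : 0 < h2) (hg1 : 0 < g1) (hg2 : 0 < g2)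
    (hσ : 0 < σ2) (hCmin : 0 < Cmin)
    (hρ : ρ = (2 : ℝ) ^ Cmin - 1) (hρpos : 0 < ρ) :
    (∃ p1 p2 : ℝ, 0 ≤ p1 ∧ 0 ≤ p2 ∧
        ρ * (p2 * g2 + σ2) ≤ p1 * h1 ∧ ρ * (p1 * g1 + σ2) ≤ p2 * h2) ↔
      ρ ^ 2 * g1 * g2 < h1 * h2 := by
  constructor
  · rintro ⟨p1, p2, hp1, hp2, h₁, h₂⟩
    have hp1' : 0 < p1 := by
      nlinarith [mul_nonneg hp2 hg2.le, mul_pos hρpos hσ]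
    have hp2' : 0 < p2 := by
      nlinarith [mul_nonneg hp1 hg1.le, mul_pos hρpos hσ]
    nlinarith [mul_le_mul h₁ h₂ (by positivity) (by positivity),
      mul_pos hp1' hp2', mul_pos hρpos hσ, mul_pos hg1 hg2,
      mul_pos (mul_pos hρpos hσ) (mul_pos hp2' hg2),
      mul_pos (mul_pos hρpos hσ) (mul_pos hp1' hg1),
      mul_pos (mul_pos hρpos hσ) (mul_pos hρpos hσ)]
  · intro hD
    have hDpos : 0 < h1 * h2 - ρ ^ 2 * g1 * g2 := by linarith
    refine ⟨ρ * σ2 * (h2 + ρ * g2) / (h1 * h2 - ρ ^ 2 * g1 * g2),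
            ρ * σ2 * (h1 + ρ * g1) / (h1 * h2 - ρ ^ 2 * g1 * g2), ?_, ?_, ?_, ?_⟩
    · positivity
    · positivity
    · rw [div_mul_eq_mul_div, div_mul_eq_mul_div,
        div_add' _ _ _ hDpos.ne', mul_div_assoc', div_le_div_iff₀ hDpos hDpos]
      ring_nf
      nlinarith [mul_pos hρpos hσ]
    · rw [div_mul_eq_mul_div, div_mul_eq_mul_div,
        div_add' _ _ _ hDpos.ne', mul_div_assoc', div_le_div_iff₀ hDpos hDpos]
      ring_nf
      nlinarith [mul_pos hρpos hσ]
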